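/- Let A₁, A₂, R₁, R₂, G₁, G₂ be real matrices such that the relation ℛ = ker([R₁ −R₂]) is invariant under diag(A₁,A₂) and R₁G₁G₁ᵀR₁ᵀ = R₂G₂G₂ᵀR₂ᵀ. Then for all k, h ∈ ℕ, R₁A₁ᵏG₁G₁ᵀ(A₁ʰ)ᵀR₁ᵀ = R₂A₂ᵏG₂G₂ᵀ(A₂ʰ)ᵀR₂ᵀ. -/

import Mathlib

/-!
Write `R = [R₁ | -R₂]` and `A = diag(A₁, A₂)`. Invariance of `ker R` under `A` gives
`ker R ⊆ ker (R Aᵏ)`, so over a field `R Aᵏ = Φₖ R` for some `r × r` matrix `Φₖ`, i.e.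
`R₁ A₁ᵏ = Φₖ R₁` and `R₂ A₂ᵏ = Φₖ R₂`. Then both sides of the claim equal
`Φₖ (Rᵢ Gᵢ Gᵢᵀ Rᵢᵀ) Φₕᵀ`, and the middle factors agree by hypothesis.
-/

open Matrix

namespace LinearMap

variable {K V W U : Type*} [DivisionRing K] [AddCommGroup V] [Module K V]
  [AddCommGroup W] [Module K W] [AddCommGroup U] [Module K U]

theorem exists_eq_comp_of_ker_le (f : V →ₗ[K] W) (g : V →ₗ[K] U) (h : ker f ≤ ker g) :
    ∃ φ : W →ₗ[K] U, g = φ ∘ₗ f := by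
  obtain ⟨φ, hφ⟩ := exists_extend ((ker f).liftQ g h ∘ₗ f.quotKerEquivRange.symm.toLinearMap)
  refine ⟨φ, LinearMap.ext fun x => ?_⟩
  have hx := LinearMap.congr_fun hφ ⟨f x, mem_range_self f x⟩
  simpa [← quotKerEquivRange_apply_mk, -quotKerEquivRange_apply_mk] using hx.symm

variable {V₁ V₂ : Type*} [AddCommGroup V₁] [Module K V₁] [AddCommGroup V₂] [Module K V₂]

theorem exists_eq_comp_of_rel (f₁ : V₁ →ₗ[K] W) (f₂ : V₂ →ₗ[K] W) (g₁ : V₁ →ₗ[K] U)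
    (g₂ : V₂ →ₗ[K] U) (h : ∀ x₁ x₂, f₁ x₁ = f₂ x₂ → g₁ x₁ = g₂ x₂) :
    ∃ φ : W →ₗ[K] U, g₁ = φ ∘ₗ f₁ ∧ g₂ = φ ∘ₗ f₂ := by
  obtain ⟨φ, hφ⟩ := exists_eq_comp_of_ker_le (f₁.coprod (-f₂)) (g₁.coprod (-g₂)) <| by
    rintro ⟨x₁, x₂⟩ hx
    simpa [← sub_eq_add_neg, sub_eq_zero] using
      h x₁ x₂ (by simpa [← sub_eq_add_neg, sub_eq_zero] using hx)
  refine ⟨φ, ?_, ?_⟩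
  · simpa [comp_assoc] using congrArg (· ∘ₗ inl K V₁ V₂) hφ
  · simpa [comp_assoc] using congrArg (· ∘ₗ inr K V₁ V₂) hφ

end LinearMap

namespace Matrix

theorem exists_mul_eq_of_mulVec_rel {K m m' n₁ n₂ : Type*} [Field K] [Fintype m] [DecidableEq m]
    [Fintype n₁] [DecidableEq n₁] [Fintype n₂] [DecidableEq n₂]
    (R₁ : Matrix m n₁ K) (R₂ : Matrix m n₂ K) (S₁ : Matrix m' n₁ K) (S₂ : Matrix m' n₂ K)
    (h : ∀ x₁ x₂, R₁ *ᵥ x₁ = R₂ *ᵥ x₂ → S₁ *ᵥ x₁ = S₂ *ᵥ x₂) :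
    ∃ Φ : Matrix m' m K, S₁ = Φ * R₁ ∧ S₂ = Φ * R₂ := by
  obtain ⟨φ, h₁, h₂⟩ :=
    LinearMap.exists_eq_comp_of_rel (toLin' R₁) (toLin' R₂) (toLin' S₁) (toLin' S₂) h
  refine ⟨LinearMap.toMatrix' φ, toLin'.injective ?_, toLin'.injective ?_⟩ <;>
    simpa [toLin'_mul]

theorem mulVec_pow_eq_of_mulVec_eq {K n₁ n₂ m : Type*} [CommSemiring K]
    [Fintype n₁] [DecidableEq n₁] [Fintype n₂] [DecidableEq n₂]
    {A₁ : Matrix n₁ n₁ K} {A₂ : Matrix n₂ n₂ K}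
    {R₁ : Matrix m n₁ K} {R₂ : Matrix m n₂ K}
    (hinv : ∀ x₁ x₂, R₁ *ᵥ x₁ = R₂ *ᵥ x₂ → R₁ *ᵥ (A₁ *ᵥ x₁) = R₂ *ᵥ (A₂ *ᵥ x₂)) (k : ℕ)
    {x₁ : n₁ → K} {x₂ : n₂ → K} (hx : R₁ *ᵥ x₁ = R₂ *ᵥ x₂) :
    R₁ *ᵥ (A₁ ^ k *ᵥ x₁) = R₂ *ᵥ (A₂ ^ k *ᵥ x₂) := by
  induction k generalizing x₁ x₂ with
  | zero => simpa using hx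
  | succ k ih => simpa only [pow_succ, ← mulVec_mulVec] using ih (hinv x₁ x₂ hx)

theorem mul_mul_transpose_eq_of_mul_eq {K m n : Type*} [CommSemiring K] [Fintype m]
    [Fintype n] {R : Matrix m n K} {X Y : Matrix n n K} {Φ Ψ : Matrix m m K}
    (hX : R * X = Φ * R) (hY : R * Y = Ψ * R) (S : Matrix n n K) :
    R * X * S * Yᵀ * Rᵀ = Φ * (R * S * Rᵀ) * Ψᵀ := by
  calc R * X * S * Yᵀ * Rᵀ = R * X * S * (R * Y)ᵀ := by simp [transpose_mul, Matrix.mul_assoc]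
    _ = Φ * (R * S * Rᵀ) * Ψᵀ := by rw [hX, hY]; simp [transpose_mul, Matrix.mul_assoc]

end Matrix

theorem stmt_10 {n1 n2 r l1 l2 : ℕ} (A1 : Matrix (Fin n1) (Fin n1) ℝ)
    (A2 : Matrix (Fin n2) (Fin n2) ℝ)
    (R1 : Matrix (Fin r) (Fin n1) ℝ) (R2 : Matrix (Fin r) (Fin n2) ℝ)
    (G1 : Matrix (Fin n1) (Fin l1) ℝ) (G2 : Matrix (Fin n2) (Fin l2) ℝ)
    (hinv : ∀ (x1 : Fin n1 → ℝ) (x2 : Fin n2 → ℝ),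
      R1.mulVec x1 = R2.mulVec x2 →
      R1.mulVec (A1.mulVec x1) = R2.mulVec (A2.mulVec x2))
    (hG : R1 * G1 * G1.transpose * R1.transpose = R2 * G2 * G2.transpose * R2.transpose) :
    ∀ k h : ℕ,
      R1 * A1 ^ k * G1 * G1.transpose * (A1 ^ h).transpose * R1.transpose =
      R2 * A2 ^ k * G2 * G2.transpose * (A2 ^ h).transpose * R2.transpose := by
  have hΦ : ∀ k, ∃ Φ : Matrix (Fin r) (Fin r) ℝ,
      R1 * A1 ^ k = Φ * R1 ∧ R2 * A2 ^ k = Φ * R2 := fun k =>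
    exists_mul_eq_of_mulVec_rel R1 R2 _ _ fun x1 x2 hx => by
      simpa only [← mulVec_mulVec] using mulVec_pow_eq_of_mulVec_eq hinv k hx
  intro k h
  obtain ⟨Φ, hΦ1, hΦ2⟩ := hΦ k
  obtain ⟨Ψ, hΨ1, hΨ2⟩ := hΦ h
  have hG' : R1 * (G1 * G1ᵀ) * R1ᵀ = R2 * (G2 * G2ᵀ) * R2ᵀ := by
    simpa only [Matrix.mul_assoc] using hG
  calc R1 * A1 ^ k * G1 * G1ᵀ * (A1 ^ h)ᵀ * R1ᵀ
      = R1 * A1 ^ k * (G1 * G1ᵀ) * (A1 ^ h)ᵀ * R1ᵀ := by simp only [Matrix.mul_assoc]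
    _ = Φ * (R2 * (G2 * G2ᵀ) * R2ᵀ) * Ψᵀ := by
      rw [mul_mul_transpose_eq_of_mul_eq hΦ1 hΨ1, hG']
    _ = R2 * A2 ^ k * G2 * G2ᵀ * (A2 ^ h)ᵀ * R2ᵀ := by
      rw [← mul_mul_transpose_eq_of_mul_eq hΦ2 hΨ2]; simp only [Matrix.mul_assoc]
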